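/- Let L : ℝ^d → ℝ be differentiable with β-Lipschitz gradient, satisfying the Polyak–Łojasiewicz (PL) condition with constant ρ > 0 relative to a value L*, i.e., (1/2)‖∇L(θ)‖² ≥ ρ(L(θ) − L*) for all θ. Fix η > 0 with ρη ≤ 1 and βη ≤ 1, and let (θ_t)_{t≥0} be generated by θ_{t+1} = θ_t − η g_t. If for every t the gradient-estimation error satisfies ‖∇L(θ_t) − g_t‖² ≤ (1 − βη)‖g_t‖², then for every T ≥ 0: L(θ_T) − L* ≤ (1 − ρη)^T (L(θ₀) − L*), i.e., the iterates converge to the optimal value at a linear rate. -/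

import Mathlib

/-!
A gradient that is `β`-Lipschitz gives the descent lemma
`L (x + v) ≤ L x + ⟪∇L x, v⟫ + β/2 ‖v‖²`. Expanding the error bound
`‖∇L x - g‖² ≤ (1 - βη) ‖g‖²` gives `2⟪∇L x, g⟫ ≥ ‖∇L x‖² + βη ‖g‖²`, which is exactly what
the step `v = -η g` needs to decrease `L` by at least `η/2 ‖∇L x‖²`. The PL inequality turns
this decrease into the contraction `L x⁺ - L* ≤ (1 - ρη) (L x - L*)`.
-/

open scoped RealInnerProductSpace

section

variable {E : Type*} [NormedAddCommGroup E] [InnerProductSpace ℝ E] [CompleteSpace E]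
  {L : E → ℝ}

theorem hasDerivAt_apply_add_smul {x v : E} {s : ℝ} (hL : DifferentiableAt ℝ L (x + s • v)) :
    HasDerivAt (fun s : ℝ => L (x + s • v)) ⟪gradient L (x + s • v), v⟫ s := by
  have hline : HasDerivAt (fun s : ℝ => x + s • v) v s := by
    simpa using ((hasDerivAt_id s).smul_const v).const_add x
  have := hL.hasGradientAt.hasFDerivAt.comp_hasDerivAt s hline
  rwa [InnerProductSpace.toDual_apply_apply] at this

theorem apply_add_le_of_lipschitz_gradient (hL : Differentiable ℝ L) {β : ℝ}
    (hLip : ∀ θ θ', ‖gradient L θ - gradient L θ'‖ ≤ β * ‖θ - θ'‖) (x v : E) :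
    L (x + v) ≤ L x + ⟪gradient L x, v⟫ + β / 2 * ‖v‖ ^ 2 := by
  set φ : ℝ → ℝ := fun s => L (x + s • v) - s * ⟪gradient L x, v⟫ - β / 2 * s ^ 2 * ‖v‖ ^ 2
  have hφ : ∀ s, HasDerivAt φ (⟪gradient L (x + s • v) - gradient L x, v⟫ - β * s * ‖v‖ ^ 2) s := by
    intro s
    have hquad := ((hasDerivAt_pow 2 s).const_mul (β / 2)).mul_const (‖v‖ ^ 2)
    refine (((hasDerivAt_apply_add_smul (hL _)).sub
      ((hasDerivAt_id s).mul_const ⟪gradient L x, v⟫)).sub hquad).congr_deriv ?_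
    rw [inner_sub_left]
    push_cast
    ring
  have hφ_nonpos : ∀ s ∈ interior (Set.Icc (0 : ℝ) 1),
      ⟪gradient L (x + s • v) - gradient L x, v⟫ - β * s * ‖v‖ ^ 2 ≤ 0 := by
    intro s hs
    have hs₀ : 0 ≤ s := (interior_subset hs).1
    have hgrad := hLip (x + s • v) x
    rw [add_sub_cancel_left, norm_smul, Real.norm_of_nonneg hs₀] at hgrad
    have hcs := (real_inner_le_norm _ _).trans (mul_le_mul_of_nonneg_right hgrad (norm_nonneg v))
    linarith
  have hanti : AntitoneOn φ (Set.Icc 0 1) :=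
    antitoneOn_of_hasDerivWithinAt_nonpos (convex_Icc 0 1)
      (fun s _ => (hφ s).continuousAt.continuousWithinAt)
      (fun s _ => (hφ s).hasDerivWithinAt) hφ_nonpos
  have h01 := hanti (Set.left_mem_Icc.2 zero_le_one) (Set.right_mem_Icc.2 zero_le_one) zero_le_one
  simp only [φ, zero_smul, add_zero, one_smul] at h01
  linarith

theorem apply_sub_smul_le_of_inexact_gradient (hL : Differentiable ℝ L) {β : ℝ}
    (hLip : ∀ θ θ', ‖gradient L θ - gradient L θ'‖ ≤ β * ‖θ - θ'‖) {η : ℝ} (hη : 0 ≤ η)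
    {x g : E} (herr : ‖gradient L x - g‖ ^ 2 ≤ (1 - β * η) * ‖g‖ ^ 2) :
    L (x - η • g) ≤ L x - η / 2 * ‖gradient L x‖ ^ 2 := by
  have hdescent := apply_add_le_of_lipschitz_gradient hL hLip x (-(η • g))
  rw [← sub_eq_add_neg, inner_neg_right, real_inner_smul_right, norm_neg, norm_smul,
    Real.norm_of_nonneg hη] at hdescent
  have hinner : ‖gradient L x‖ ^ 2 + β * η * ‖g‖ ^ 2 ≤ 2 * ⟪gradient L x, g⟫ := by
    rw [norm_sub_sq_real] at herr
    linarith
  linarith [mul_le_mul_of_nonneg_left hinner hη]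

end

theorem pl_inexact_gd_linear_rate_general {d : ℕ}
    (L : EuclideanSpace ℝ (Fin d) → ℝ) (hL : Differentiable ℝ L)
    (β : ℝ) (hLip : ∀ θ θ', ‖gradient L θ - gradient L θ'‖ ≤ β * ‖θ - θ'‖)
    (ρ : ℝ) (Lstar : ℝ)
    (hPL : ∀ θ, ρ * (L θ - Lstar) ≤ (1/2) * ‖gradient L θ‖^2)
    (η : ℝ) (hη : 0 < η) (hρη : ρ * η ≤ 1)
    (θ g : ℕ → EuclideanSpace ℝ (Fin d))
    (hupd : ∀ t, θ (t + 1) = θ t - η • g t)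
    (herr : ∀ t, ‖gradient L (θ t) - g t‖^2 ≤ (1 - β * η) * ‖g t‖^2) :
    ∀ T : ℕ, L (θ T) - Lstar ≤ (1 - ρ * η) ^ T * (L (θ 0) - Lstar) := by
  intro T
  refine le_geom (u := fun t => L (θ t) - Lstar) (by linarith) T fun t _ => ?_
  have hdecrease := apply_sub_smul_le_of_inexact_gradient hL hLip hη.le (herr t)
  have hpl := mul_le_mul_of_nonneg_left (hPL (θ t)) hη.le
  simp only [hupd]
  linarith

/-- Linear convergence of inexact gradient descent under the PL condition when the
squared gradient-estimation error stays below a fixed fraction of the squared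
update direction. -/
theorem pl_inexact_gd_linear_rate {d : ℕ}
    (L : EuclideanSpace ℝ (Fin d) → ℝ) (hL : Differentiable ℝ L)
    (β : ℝ) (hLip : ∀ θ θ', ‖gradient L θ - gradient L θ'‖ ≤ β * ‖θ - θ'‖)
    (ρ : ℝ) (hρ : 0 < ρ) (Lstar : ℝ)
    (hPL : ∀ θ, ρ * (L θ - Lstar) ≤ (1/2) * ‖gradient L θ‖^2)
    (η : ℝ) (hη : 0 < η) (hρη : ρ * η ≤ 1) (hβη : β * η ≤ 1)
    (θ g : ℕ → EuclideanSpace ℝ (Fin d))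
    (hupd : ∀ t, θ (t + 1) = θ t - η • g t)
    (herr : ∀ t, ‖gradient L (θ t) - g t‖^2 ≤ (1 - β * η) * ‖g t‖^2) :
    ∀ T : ℕ, L (θ T) - Lstar ≤ (1 - ρ * η) ^ T * (L (θ 0) - Lstar) :=
  pl_inexact_gd_linear_rate_general L hL β hLip ρ Lstar hPL η hη hρη θ g hupd herr
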